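/- arXiv:0908.4170 — 6 statements merged into one kernel-verified Lean document; each statement's English description precedes it below -/
import Mathlib

section
/- For a fixed integer n ≥ 2 and fixed ρ > 0, the quantity λ_d(ρ) = ∫₀^ρ d / √(cosh(u)^(2n-2) − d²) du tends to +∞ as d → 1⁻. -/
/-!
On `[0, ρ]` one has `cosh u ^ m ≤ 1 + c ^ 2 u ^ 2` for some `c > 0`, hence
`cosh u ^ m - d ^ 2 ≤ (√(1 - d ^ 2) + c u) ^ 2`. So the integrand dominates
`d / (√(1 - d ^ 2) + c u)`, whose integral over `[0, ρ]` is
`(d / c) log ((√(1 - d ^ 2) + c ρ) / √(1 - d ^ 2))`, and this diverges as `d → 1⁻`.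
-/

open Real MeasureTheory intervalIntegral Filter

open Set Topology

lemma Real.exp_le_one_add_mul_exp (x : ℝ) : exp x ≤ 1 + x * exp x := by
  have h := one_sub_le_exp_neg x
  have hinv : exp (-x) * exp x = 1 := by rw [← exp_add, neg_add_cancel, exp_zero]
  nlinarith [exp_pos x]

lemma exists_cosh_pow_le_one_add_sq_mul_sq (m : ℕ) (ρ : ℝ) :
    ∃ c > 0, ∀ u, |u| ≤ ρ → cosh u ^ m ≤ 1 + c ^ 2 * u ^ 2 := by
  refine ⟨√(m / 2 * exp (m * ρ ^ 2 / 2) + 1), by positivity, fun u hu => ?_⟩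
  have hu2 : u ^ 2 ≤ ρ ^ 2 := sq_le_sq' (abs_le.1 hu).1 (abs_le.1 hu).2
  rw [sq_sqrt (by positivity)]
  calc cosh u ^ m ≤ exp (u ^ 2 / 2) ^ m := by gcongr; exact cosh_le_exp_half_sq u
    _ = exp (m * u ^ 2 / 2) := by rw [← exp_nat_mul]; ring_nf
    _ ≤ 1 + m * u ^ 2 / 2 * exp (m * u ^ 2 / 2) := exp_le_one_add_mul_exp _
    _ ≤ 1 + m * u ^ 2 / 2 * exp (m * ρ ^ 2 / 2) := by gcongr
    _ ≤ 1 + (m / 2 * exp (m * ρ ^ 2 / 2) + 1) * u ^ 2 := by nlinarith [sq_nonneg u]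

lemma integral_inv_add_mul {a c ρ : ℝ} (ha : 0 < a) (hc : 0 < c) (hρ : 0 ≤ ρ) :
    ∫ u in (0 : ℝ)..ρ, (a + c * u)⁻¹ = c⁻¹ * log ((a + c * ρ) / a) := by
  rw [integral_comp_add_mul (fun x => x⁻¹) hc.ne', mul_zero, add_zero,
    integral_inv_of_pos ha (by positivity), smul_eq_mul]

lemma tendsto_log_add_div_self_nhdsGT_zero {b : ℝ} (hb : 0 < b) :
    Tendsto (fun a => log ((a + b) / a)) (𝓝[>] 0) atTop := by
  have h : Tendsto (fun a => 1 + b * a⁻¹) (𝓝[>] 0) atTop :=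
    tendsto_atTop_add_const_left _ _ (tendsto_inv_nhdsGT_zero.const_mul_atTop hb)
  refine (tendsto_log_atTop.comp h).congr' ?_
  filter_upwards [self_mem_nhdsWithin] with a (ha : 0 < a)
  rw [Function.comp_apply, add_div, div_self ha.ne', div_eq_mul_inv]

lemma tendsto_sqrt_one_sub_sq_nhdsLT_one :
    Tendsto (fun d : ℝ => √(1 - d ^ 2)) (𝓝[<] 1) (𝓝[>] 0) := by
  refine tendsto_nhdsWithin_iff.2 ⟨?_, ?_⟩
  · have h : ContinuousAt (fun d : ℝ => √(1 - d ^ 2)) 1 := by fun_prop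
    simpa using h.tendsto.mono_left nhdsWithin_le_nhds
  · have hneg : Ioi (-1 : ℝ) ∈ 𝓝[<] 1 := nhdsWithin_le_nhds (Ioi_mem_nhds (by norm_num))
    filter_upwards [self_mem_nhdsWithin, hneg] with d (hd1 : d < 1) (hd2 : -1 < d)
    exact sqrt_pos.2 (by nlinarith)

lemma mul_log_le_integral_div_sqrt_sub_sq {f : ℝ → ℝ} {c ρ d : ℝ} (hc : 0 < c) (hρ : 0 ≤ ρ)
    (hd₀ : 0 ≤ d) (hd₁ : d < 1) (hf : ContinuousOn f (Icc 0 ρ))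
    (hf_ge : ∀ u ∈ Icc 0 ρ, 1 ≤ f u) (hf_le : ∀ u ∈ Icc 0 ρ, f u ≤ 1 + c ^ 2 * u ^ 2) :
    d * (c⁻¹ * log ((√(1 - d ^ 2) + c * ρ) / √(1 - d ^ 2))) ≤
      ∫ u in (0 : ℝ)..ρ, d / √(f u - d ^ 2) := by
  set a := √(1 - d ^ 2)
  have ha : 0 < a := sqrt_pos.2 (by nlinarith)
  have ha_sq : a ^ 2 = 1 - d ^ 2 := sq_sqrt (by nlinarith)
  have hpos : ∀ u ∈ Icc 0 ρ, 0 < f u - d ^ 2 := fun u hu => by nlinarith [hf_ge u hu]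
  have hsqrt_le : ∀ u ∈ Icc 0 ρ, √(f u - d ^ 2) ≤ a + c * u := fun u hu => by
    have hcu : 0 ≤ c * u := mul_nonneg hc.le hu.1
    rw [sqrt_le_left (by positivity)]
    nlinarith [hf_le u hu, mul_nonneg ha.le hcu]
  have hden : ∀ u ∈ Icc 0 ρ, a + c * u ≠ 0 := fun u hu => by
    have := mul_nonneg hc.le hu.1
    positivity
  have hIcc : uIcc 0 ρ = Icc 0 ρ := uIcc_of_le hρ
  calc d * (c⁻¹ * log ((a + c * ρ) / a)) = ∫ u in (0 : ℝ)..ρ, d / (a + c * u) := by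
        simp_rw [div_eq_mul_inv d]
        rw [intervalIntegral.integral_const_mul, integral_inv_add_mul ha hc hρ]
    _ ≤ ∫ u in (0 : ℝ)..ρ, d / √(f u - d ^ 2) := by
      refine integral_mono_on hρ ?_ ?_ fun u hu =>
        div_le_div_of_nonneg_left hd₀ (sqrt_pos.2 (hpos u hu)) (hsqrt_le u hu)
      · refine ContinuousOn.intervalIntegrable ?_
        rw [hIcc]
        exact continuousOn_const.div (by fun_prop) hden
      · refine ContinuousOn.intervalIntegrable ?_
        rw [hIcc]
        exact continuousOn_const.div (hf.sub continuousOn_const).sqrt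
          fun u hu => (sqrt_pos.2 (hpos u hu)).ne'

theorem md_property_tendsto_atTop_general (n : ℕ) (ρ : ℝ) (hρ : 0 < ρ) :
    Tendsto (fun d : ℝ => ∫ u in (0:ℝ)..ρ,
        d / Real.sqrt (Real.cosh u ^ (2 * n - 2) - d ^ 2))
      (nhdsWithin 1 (Set.Ioo 0 1)) atTop := by
  obtain ⟨c, hc, hcosh⟩ := exists_cosh_pow_le_one_add_sq_mul_sq (2 * n - 2) ρ
  have hsqrt : Tendsto (fun d : ℝ => √(1 - d ^ 2)) (𝓝[Ioo 0 1] 1) (𝓝[>] 0) :=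
    tendsto_sqrt_one_sub_sq_nhdsLT_one.mono_left (nhdsWithin_mono _ Ioo_subset_Iio_self)
  have hlog := ((tendsto_log_add_div_self_nhdsGT_zero (mul_pos hc hρ)).comp hsqrt).const_mul_atTop
    (inv_pos.2 hc)
  refine tendsto_atTop_mono' _ ?_
    ((tendsto_nhdsWithin_of_tendsto_nhds tendsto_id).pos_mul_atTop one_pos hlog)
  filter_upwards [self_mem_nhdsWithin] with d hd
  exact mul_log_le_integral_div_sqrt_sub_sq hc hρ.le hd.1.le hd.2 (by fun_prop)
    (fun u _ => one_le_pow₀ (one_le_cosh u)) fun u hu => hcosh u ((abs_of_nonneg hu.1).trans_le hu.2)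

/-- M_d-property: for fixed ρ > 0, λ_d(ρ) → +∞ as d → 1⁻. -/
theorem md_property_tendsto_atTop (n : ℕ) (hn : 2 ≤ n) (ρ : ℝ) (hρ : 0 < ρ) :
    Tendsto (fun d : ℝ => ∫ u in (0:ℝ)..ρ,
        d / Real.sqrt (Real.cosh u ^ (2 * n - 2) - d ^ 2))
      (nhdsWithin 1 (Set.Ioo 0 1)) atTop :=
  md_property_tendsto_atTop_general n ρ hρ
end

section
/- The function R(a) = sinh(a) · ∫₁^∞ (sinh²(a)·s² + 1)^(−1/2) · (s^(2n−2) − 1)^(−1/2) ds satisfies R(a) < π/(2n−2) for every a > 0. -/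
/-!
Write `m = n - 1` and `c = sinh a > 0`. Since `c s < √(c² s² + 1)`, the integrand of `R(a)`,
multiplied by `c`, is strictly below `1 / (s √(s^{2m} - 1))` on `(1, ∞)`. The latter has the
antiderivative `-arcsin (s^{-m}) / m`, which vanishes at infinity and equals `-π / (2m)` at
`s = 1`, so its integral is `π / (2m) = π / (2n - 2)`.
-/

open Real MeasureTheory

theorem MeasureTheory.setIntegral_lt_setIntegral_of_forall_lt {X : Type*} [MeasurableSpace X]
    {μ : Measure X} {s : Set X} {f g : X → ℝ} (hs : MeasurableSet s) (hμs : μ s ≠ 0)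
    (hf : IntegrableOn f s μ) (hg : IntegrableOn g s μ) (hfg : ∀ x ∈ s, f x < g x) :
    ∫ x in s, f x ∂μ < ∫ x in s, g x ∂μ := by
  have hsupp : s ⊆ Function.support (g - f) := fun x hx => (sub_pos.2 (hfg x hx)).ne'
  have hpos : 0 < ∫ x in s, (g - f) x ∂μ := by
    rw [setIntegral_pos_iff_support_of_nonneg_ae _ (hg.sub hf), Set.inter_eq_right.2 hsupp]
    · exact pos_iff_ne_zero.2 hμs
    · exact (ae_restrict_iff' hs).2 (ae_of_all _ fun x hx => (sub_pos.2 (hfg x hx)).le)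
  rw [Pi.sub_def, integral_sub hg hf] at hpos
  linarith

theorem Real.div_sqrt_sq_mul_sq_add_one_lt_inv (c : ℝ) {s : ℝ} (hs : 0 < s) :
    c / √(c ^ 2 * s ^ 2 + 1) < s⁻¹ := by
  have hcs : c * s < √(c ^ 2 * s ^ 2 + 1) :=
    calc c * s ≤ |c * s| := le_abs_self _
      _ = √((c * s) ^ 2) := (sqrt_sq_eq_abs _).symm
      _ < √(c ^ 2 * s ^ 2 + 1) := sqrt_lt_sqrt (sq_nonneg _) (by nlinarith)
  rw [div_lt_iff₀ (sqrt_pos.2 (by positivity)), inv_mul_eq_div, lt_div_iff₀ hs]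
  exact hcs

section ArcsinInvPow

variable {m : ℕ}

theorem Real.hasDerivAt_neg_arcsin_inv_pow_div (hm : m ≠ 0) {s : ℝ} (hs : 1 < s) :
    HasDerivAt (fun t : ℝ => -arcsin (t ^ m)⁻¹ / m) (1 / (s * √(s ^ (2 * m) - 1))) s := by
  have hs0 : 0 < s := one_pos.trans hs
  have hsm : 1 < s ^ m := one_lt_pow₀ hs hm
  have hs2m : 0 < s ^ (2 * m) - 1 := sub_pos.2 (one_lt_pow₀ hs (by omega))
  have harcsin : HasDerivAt arcsin (1 / √(1 - ((s ^ m)⁻¹) ^ 2)) (s ^ m)⁻¹ :=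
    hasDerivAt_arcsin (by linarith [inv_pos.2 (one_pos.trans hsm)]) (inv_lt_one_of_one_lt₀ hsm).ne
  refine ((harcsin.comp s ((hasDerivAt_pow m s).inv (by positivity))).neg.div_const
    (m : ℝ)).congr_deriv ?_
  have hsqrt : √(1 - ((s ^ m)⁻¹) ^ 2) = √(s ^ (2 * m) - 1) / s ^ m := by
    have hsq : 1 - ((s ^ m)⁻¹) ^ 2 = (s ^ (2 * m) - 1) / (s ^ m) ^ 2 := by
      field_simp
      ring
    rw [hsq, sqrt_div' _ (sq_nonneg _), sqrt_sq (by positivity)]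
  rw [hsqrt]
  field_simp
  exact pow_sub_one_mul hm s

theorem Real.tendsto_neg_arcsin_inv_pow_div_atTop (hm : m ≠ 0) :
    Filter.Tendsto (fun t : ℝ => -arcsin (t ^ m)⁻¹ / m) Filter.atTop (nhds 0) := by
  have h := ((continuous_arcsin.tendsto 0).comp
    (Filter.tendsto_pow_atTop hm).inv_tendsto_atTop).neg.div_const (m : ℝ)
  rwa [arcsin_zero, neg_zero, zero_div] at h

theorem Real.continuousAt_neg_arcsin_inv_pow_div {x : ℝ} (hx : x ≠ 0) :
    ContinuousAt (fun t : ℝ => -arcsin (t ^ m)⁻¹ / m) x :=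
  ((continuous_arcsin.continuousAt.comp ((continuousAt_pow x m).inv₀ (pow_ne_zero m hx))).neg
    ).div_const _

theorem Real.integrableOn_Ioi_one_div_mul_sqrt_pow_sub_one (hm : m ≠ 0) :
    IntegrableOn (fun s : ℝ => 1 / (s * √(s ^ (2 * m) - 1))) (Set.Ioi 1) :=
  integrableOn_Ioi_deriv_of_nonneg
    (continuousAt_neg_arcsin_inv_pow_div one_ne_zero).continuousWithinAt
    (fun _ hs => hasDerivAt_neg_arcsin_inv_pow_div hm hs)
    (fun s hs => by have : (1 : ℝ) < s := hs; positivity)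
    (tendsto_neg_arcsin_inv_pow_div_atTop hm)

theorem Real.integral_Ioi_one_div_mul_sqrt_pow_sub_one (hm : m ≠ 0) :
    ∫ s in Set.Ioi (1 : ℝ), 1 / (s * √(s ^ (2 * m) - 1)) = π / (2 * m) := by
  rw [integral_Ioi_of_hasDerivAt_of_nonneg
    (continuousAt_neg_arcsin_inv_pow_div one_ne_zero).continuousWithinAt
    (fun _ hs => hasDerivAt_neg_arcsin_inv_pow_div hm hs)
    (fun s hs => by have : (1 : ℝ) < s := hs; positivity)
    (tendsto_neg_arcsin_inv_pow_div_atTop hm)]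
  simp only [one_pow, inv_one, arcsin_one]
  ring

end ArcsinInvPow

theorem catenoid_integrand_lt (c : ℝ) {m : ℕ} (hm : m ≠ 0) {s : ℝ} (hs : 1 < s) :
    c * (1 / (√(c ^ 2 * s ^ 2 + 1) * √(s ^ (2 * m) - 1))) < 1 / (s * √(s ^ (2 * m) - 1)) := by
  have hroot : 0 < √(s ^ (2 * m) - 1) := sqrt_pos.2 (sub_pos.2 (one_lt_pow₀ hs (by omega)))
  have h := mul_lt_mul_of_pos_right (div_sqrt_sq_mul_sq_add_one_lt_inv c (one_pos.trans hs))
    (inv_pos.2 hroot)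
  simpa only [one_div, mul_inv, ← mul_assoc, div_eq_mul_inv, mul_one, one_mul] using h

/-- R(a) < π/(2n−2) for every a > 0. -/
theorem catenoid_height_lt (n : ℕ) (hn : 2 ≤ n) (a : ℝ) (ha : 0 < a) :
    Real.sinh a * (∫ s in Set.Ioi (1:ℝ),
        1 / (Real.sqrt (Real.sinh a ^ 2 * s ^ 2 + 1) * Real.sqrt (s ^ (2 * n - 2) - 1)))
      < Real.pi / (2 * (n : ℝ) - 2) := by
  obtain ⟨m, rfl⟩ : ∃ m, n = m + 1 := ⟨n - 1, by omega⟩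
  have hm : m ≠ 0 := by omega
  have hexp : 2 * (m + 1) - 2 = 2 * m := by omega
  have hden : 2 * ((m + 1 : ℕ) : ℝ) - 2 = 2 * m := by push_cast; ring
  rw [hexp, hden, ← integral_const_mul, ← integral_Ioi_one_div_mul_sqrt_pow_sub_one hm]
  have hdom := integrableOn_Ioi_one_div_mul_sqrt_pow_sub_one hm
  refine setIntegral_lt_setIntegral_of_forall_lt measurableSet_Ioi (by simp) ?_ hdom
    fun s hs => catenoid_integrand_lt _ hm hs
  refine hdom.mono' (by fun_prop : Measurable _).aestronglyMeasurable
    ((ae_restrict_iff' measurableSet_Ioi).2 (ae_of_all _ fun s hs => ?_))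
  rw [norm_of_nonneg (mul_nonneg (sinh_pos_iff.2 ha).le (by positivity))]
  exact (catenoid_integrand_lt _ hm hs).le
end

section
/- R(a) → 0 as a → 0⁺, where R(a) = sinh(a) · ∫₁^∞ (sinh²(a)·s² + 1)^(−1/2) · (s^(2n−2) − 1)^(−1/2) ds. -/
/-!
Dominated convergence. Moving `sinh a` under the integral, the integrand is
`sinh a / √(sinh² a · s² + 1) / √(s ^ (2n-2) - 1)`, which tends to `0` pointwise as `a → 0`.
Since `sinh a / √(sinh² a · s² + 1) ≤ min (sinh a) (1 / s)` and `s ^ (2n-2) - 1 ≥ s - 1`,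
for `0 < a ≤ 1` it is dominated by `min (sinh 1) (s - 1)⁻¹ / √(s - 1)`, which behaves like
`(s - 1)^(-1/2)` near `1` and like `(s - 1)^(-3/2)` at infinity, hence is integrable on `(1, ∞)`.
-/

open Real MeasureTheory Filter Set Topology

lemma rpow_neg_three_halves {u : ℝ} (hu : 0 ≤ u) : u ^ (-(3 / 2) : ℝ) = u⁻¹ / √u := by
  rw [show (3 / 2 : ℝ) = 1 + 1 / 2 by norm_num, rpow_neg hu, rpow_add' hu (by norm_num), rpow_one,
    ← sqrt_eq_rpow, mul_inv, div_eq_mul_inv]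

lemma integrableOn_Ioi_min_inv_div_sqrt {c : ℝ} (hc : 0 ≤ c) :
    IntegrableOn (fun u : ℝ => min c u⁻¹ / √u) (Ioi 0) := by
  have hmeas : AEStronglyMeasurable (fun u : ℝ => min c u⁻¹ / √u) volume :=
    (by fun_prop : Measurable fun u : ℝ => min c u⁻¹ / √u).aestronglyMeasurable
  have hnorm : ∀ u : ℝ, 0 < u → ‖min c u⁻¹ / √u‖ = min c u⁻¹ / √u := fun u hu =>
    norm_of_nonneg (div_nonneg (le_min hc (inv_nonneg.2 hu.le)) (sqrt_nonneg u))
  rw [← Ioc_union_Ioi_eq_Ioi zero_le_one]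
  refine IntegrableOn.union ?_ ?_
  · have hdom : IntegrableOn (fun u : ℝ => c * u ^ (-(1 / 2) : ℝ)) (Ioc 0 1) :=
      (intervalIntegral.intervalIntegrable_rpow' (by norm_num)).1.const_mul c
    refine hdom.mono' hmeas.restrict (ae_restrict_of_forall_mem measurableSet_Ioc fun u hu => ?_)
    rw [hnorm u hu.1, rpow_neg hu.1.le, ← sqrt_eq_rpow, ← div_eq_mul_inv]
    exact div_le_div_of_nonneg_right (min_le_left _ _) (sqrt_nonneg u)
  · have hdom : IntegrableOn (fun u : ℝ => u ^ (-(3 / 2) : ℝ)) (Ioi 1) :=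
      integrableOn_Ioi_rpow_of_lt (by norm_num) one_pos
    refine hdom.mono' hmeas.restrict (ae_restrict_of_forall_mem measurableSet_Ioi fun u hu => ?_)
    have hu0 : (0 : ℝ) < u := zero_lt_one.trans hu
    rw [hnorm u hu0, rpow_neg_three_halves hu0.le]
    exact div_le_div_of_nonneg_right (min_le_right _ _) (sqrt_nonneg u)

lemma integrableOn_Ioi_one_min_inv_sub_div_sqrt {c : ℝ} (hc : 0 ≤ c) :
    IntegrableOn (fun s : ℝ => min c (s - 1)⁻¹ / √(s - 1)) (Ioi 1) := by
  have := ((measurePreserving_sub_right volume (1 : ℝ)).integrableOn_comp_preimage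
    (measurableEmbedding_subRight 1)).2 (integrableOn_Ioi_min_inv_div_sqrt hc)
  rwa [preimage_sub_const_Ioi, zero_add] at this

lemma div_sqrt_sq_mul_sq_add_one_le_min {x s : ℝ} (hx : 0 ≤ x) (hs : 0 < s) :
    x / √(x ^ 2 * s ^ 2 + 1) ≤ min x s⁻¹ := by
  have hA : 1 ≤ √(x ^ 2 * s ^ 2 + 1) := one_le_sqrt.2 (le_add_of_nonneg_left (by positivity))
  refine le_min (div_le_self hx hA) ?_
  rw [div_le_iff₀ (zero_lt_one.trans_le hA), le_inv_mul_iff₀ hs,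
    le_sqrt (mul_nonneg hs.le hx) (by positivity)]
  nlinarith

noncomputable def catenoidIntegrand (m : ℕ) (a s : ℝ) : ℝ :=
  sinh a * (1 / (√(sinh a ^ 2 * s ^ 2 + 1) * √(s ^ m - 1)))

lemma norm_catenoidIntegrand_le {m : ℕ} (hm : m ≠ 0) {a s : ℝ} (ha₀ : 0 ≤ a) (ha₁ : a ≤ 1)
    (hs : 1 < s) : ‖catenoidIntegrand m a s‖ ≤ min (sinh 1) (s - 1)⁻¹ / √(s - 1) := by
  have hsinh : 0 ≤ sinh a := sinh_nonneg_iff.2 ha₀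
  have hfactor : sinh a / √(sinh a ^ 2 * s ^ 2 + 1) ≤ min (sinh 1) (s - 1)⁻¹ :=
    (div_sqrt_sq_mul_sq_add_one_le_min hsinh (by linarith)).trans
      (min_le_min (sinh_le_sinh.2 ha₁) (inv_anti₀ (by linarith) (by linarith)))
  have hpow : √(s - 1) ≤ √(s ^ m - 1) :=
    sqrt_le_sqrt (by linarith [le_self_pow₀ hs.le hm])
  rw [catenoidIntegrand, mul_one_div, ← div_div, norm_of_nonneg (by positivity)]
  exact div_le_div₀ (by positivity) hfactor (sqrt_pos.2 (sub_pos.2 hs)) hpow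

lemma tendsto_catenoidIntegrand_zero (m : ℕ) (s : ℝ) :
    Tendsto (fun a => catenoidIntegrand m a s) (𝓝 0) (𝓝 0) := by
  have hcont : Continuous fun a => catenoidIntegrand m a s := by
    simp only [catenoidIntegrand, one_div, mul_inv]
    have hsqrt : Continuous fun a => √(sinh a ^ 2 * s ^ 2 + 1) := by fun_prop
    exact continuous_sinh.mul ((hsqrt.inv₀ fun a => by positivity).mul continuous_const)
  simpa [catenoidIntegrand] using hcont.tendsto 0

/-- R(a) → 0 as a → 0⁺. -/
theorem catenoid_height_tendsto_zero (n : ℕ) (hn : 2 ≤ n) :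
    Tendsto (fun a : ℝ => Real.sinh a * (∫ s in Set.Ioi (1:ℝ),
        1 / (Real.sqrt (Real.sinh a ^ 2 * s ^ 2 + 1) * Real.sqrt (s ^ (2 * n - 2) - 1))))
      (nhdsWithin 0 (Set.Ioi 0)) (nhds 0) := by
  have hm : 2 * n - 2 ≠ 0 := by omega
  simp_rw [← integral_const_mul]
  have hmeas : ∀ᶠ a in 𝓝[>] 0,
      AEStronglyMeasurable (catenoidIntegrand (2 * n - 2) a) (volume.restrict (Ioi 1)) :=
    Eventually.of_forall fun a => by
      unfold catenoidIntegrand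
      exact (by fun_prop : Measurable _).aestronglyMeasurable
  have hdom : ∀ᶠ a in 𝓝[>] 0, ∀ᵐ s ∂volume.restrict (Ioi 1),
      ‖catenoidIntegrand (2 * n - 2) a s‖ ≤ min (sinh 1) (s - 1)⁻¹ / √(s - 1) := by
    filter_upwards [Ioc_mem_nhdsGT zero_lt_one] with a ha
    exact ae_restrict_of_forall_mem measurableSet_Ioi fun s hs =>
      norm_catenoidIntegrand_le hm ha.1.le ha.2 hs
  have hlim : ∀ᵐ s ∂volume.restrict (Ioi 1),
      Tendsto (catenoidIntegrand (2 * n - 2) · s) (𝓝[>] 0) (𝓝 0) :=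
    ae_of_all _ fun s => (tendsto_catenoidIntegrand_zero _ s).mono_left nhdsWithin_le_nhds
  have h := tendsto_integral_filter_of_dominated_convergence _ hmeas hdom
    (integrableOn_Ioi_one_min_inv_sub_div_sqrt (sinh_nonneg_iff.2 zero_le_one)) hlim
  rw [integral_zero] at h
  exact h
end

section
/- T(a) → +∞ as a → 0⁺, where T(a) = cosh(a) · ∫₁^∞ (s^(2n−2) − 1)^(−1/2) · (cosh²(a)·s² − 1)^(−1/2) ds. -/
/-! For `c = cosh a` close to `1` and `c² - 1 ≤ s - 1 ≤ 1`, both quantities under the square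
roots are at most a constant times `s - 1`, so the integrand is at least a constant times
`1 / (s - 1)` on `(c², 2]` and the integral is at least a constant times `-log (c² - 1) → +∞`.
This lower bound is only meaningful because the integral converges: the integrand is dominated by
`(c² - 1)^(-1/2) / (s √(s - 1))`, which has the bounded primitive `2 arctan √(s - 1)`. -/

open Real MeasureTheory Filter Set Topology

namespace TranslationHypersurface

noncomputable def heightIntegrand (m : ℕ) (c s : ℝ) : ℝ :=
  1 / (√(s ^ m - 1) * √(c ^ 2 * s ^ 2 - 1))

lemma heightIntegrand_nonneg (m : ℕ) (c s : ℝ) : 0 ≤ heightIntegrand m c s := by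
  unfold heightIntegrand; positivity

lemma measurable_heightIntegrand (m : ℕ) (c : ℝ) : Measurable (heightIntegrand m c) := by
  unfold heightIntegrand; fun_prop

lemma hasDerivAt_two_mul_arctan_sqrt_sub_one {s : ℝ} (hs : 1 < s) :
    HasDerivAt (fun s => 2 * arctan √(s - 1)) (1 / (s * √(s - 1))) s := by
  have hpos : 0 < s - 1 := by linarith
  refine ((((hasDerivAt_id s).sub_const 1).sqrt hpos.ne').arctan.const_mul 2).congr_deriv ?_
  simp only [id, sq_sqrt hpos.le]
  field_simp
  ring

lemma integrableOn_Ioi_one_div_mul_sqrt_sub_one :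
    IntegrableOn (fun s => 1 / (s * √(s - 1))) (Ioi 1) := by
  refine integrableOn_Ioi_deriv_of_nonneg (g := fun s => 2 * arctan √(s - 1)) (l := π)
    (by fun_prop) (fun s hs => hasDerivAt_two_mul_arctan_sqrt_sub_one hs)
    (fun s hs => by have : (0 : ℝ) < s := one_pos.trans hs; positivity) ?_
  have h := (tendsto_arctan_atTop.mono_right nhdsWithin_le_nhds).comp
    (tendsto_sqrt_atTop.comp (tendsto_atTop_add_const_right _ (-1) tendsto_id))
  convert h.const_mul 2 using 2
  · simp [sub_eq_add_neg]
  · ring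

lemma heightIntegrand_le {m : ℕ} (hm : m ≠ 0) {c s : ℝ} (hc : 1 < c) (hs : 1 < s) :
    heightIntegrand m c s ≤ (√(c ^ 2 - 1))⁻¹ * (1 / (s * √(s - 1))) := by
  have hc2 : 0 < c ^ 2 - 1 := by nlinarith
  have h1 : √(s - 1) ≤ √(s ^ m - 1) := by
    gcongr; exact le_self_pow₀ hs.le hm
  have h2 : √(c ^ 2 - 1) * s ≤ √(c ^ 2 * s ^ 2 - 1) := by
    calc √(c ^ 2 - 1) * s = √((c ^ 2 - 1) * s ^ 2) := by
          rw [sqrt_mul hc2.le, sqrt_sq (by linarith)]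
      _ ≤ _ := by gcongr; nlinarith
  have hpos : 0 < √(c ^ 2 - 1) * s * √(s - 1) := by
    have : 0 < s - 1 := by linarith
    positivity
  calc heightIntegrand m c s ≤ 1 / (√(c ^ 2 - 1) * s * √(s - 1)) := by
        refine one_div_le_one_div_of_le hpos ?_
        calc √(c ^ 2 - 1) * s * √(s - 1) = √(s - 1) * (√(c ^ 2 - 1) * s) := by ring
          _ ≤ _ := by gcongr
    _ = _ := by field_simp

lemma integrableOn_heightIntegrand {m : ℕ} (hm : m ≠ 0) {c : ℝ} (hc : 1 < c) :
    IntegrableOn (heightIntegrand m c) (Ioi 1) := by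
  refine (integrableOn_Ioi_one_div_mul_sqrt_sub_one.const_mul (√(c ^ 2 - 1))⁻¹).mono'
    (measurable_heightIntegrand m c).aestronglyMeasurable ?_
  filter_upwards [ae_restrict_mem measurableSet_Ioi] with s hs
  rw [norm_of_nonneg (heightIntegrand_nonneg m c s)]
  exact heightIntegrand_le hm hc hs

lemma pow_sub_one_le_mul_sub_one (m : ℕ) {s : ℝ} (hs₁ : 1 ≤ s) (hs₂ : s ≤ 2) :
    s ^ m - 1 ≤ m * 2 ^ (m - 1) * (s - 1) := by
  have h := abs_pow_sub_pow_le s 1 m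
  rw [one_pow, abs_one, abs_of_nonneg (sub_nonneg.2 hs₁), abs_of_nonneg (by linarith : 0 ≤ s),
    max_eq_left hs₁] at h
  calc s ^ m - 1 ≤ (s - 1) * m * s ^ (m - 1) := (le_abs_self _).trans h
    _ ≤ (s - 1) * m * 2 ^ (m - 1) := by gcongr
    _ = _ := by ring

lemma one_div_mul_sub_one_le_heightIntegrand {m : ℕ} (hm : m ≠ 0) {c s : ℝ} (hc : 1 < c)
    (hs₁ : c ^ 2 - 1 ≤ s - 1) (hs₂ : s ≤ 2) :
    1 / (√(m * 2 ^ (m - 1) * 7) * (s - 1)) ≤ heightIntegrand m c s := by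
  have hs : 1 < s := by nlinarith
  have hA : 0 < s ^ m - 1 := by linarith [one_lt_pow₀ hs hm]
  have hB : 0 < c ^ 2 * s ^ 2 - 1 := by
    nlinarith [one_lt_mul_of_lt_of_le (one_lt_pow₀ hc two_ne_zero) (one_lt_pow₀ hs two_ne_zero).le]
  refine one_div_le_one_div_of_le (by positivity) ?_
  calc √(s ^ m - 1) * √(c ^ 2 * s ^ 2 - 1) ≤ √(m * 2 ^ (m - 1) * (s - 1) * (7 * (s - 1))) := by
        rw [← sqrt_mul hA.le]
        gcongr
        · exact pow_sub_one_le_mul_sub_one m hs.le hs₂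
        · -- `c² s² - 1 = (c² - 1) s² + (s² - 1) ≤ 4 (s - 1) + 3 (s - 1)`
          nlinarith [mul_le_mul_of_nonneg_right hs₁ (sq_nonneg s),
            mul_nonneg (by linarith : 0 ≤ s - 1) (by linarith : 0 ≤ 2 - s)]
    _ = √(m * 2 ^ (m - 1) * 7 * (s - 1) ^ 2) := by congr 1; ring
    _ = √(m * 2 ^ (m - 1) * 7) * (s - 1) := by
        rw [sqrt_mul (by positivity), sqrt_sq (by linarith)]

lemma integral_const_mul_inv_sub_one {ε : ℝ} (hε : 0 < ε) (C : ℝ) :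
    ∫ s in (1 + ε)..2, C * (s - 1)⁻¹ = C * -log ε := by
  rw [intervalIntegral.integral_const_mul,
    intervalIntegral.integral_comp_sub_right (fun x => x⁻¹), add_sub_cancel_left,
    integral_inv_of_pos hε (by norm_num)]
  norm_num [log_inv]

lemma exists_pos_mul_neg_log_le_integral_heightIntegrand {m : ℕ} (hm : m ≠ 0) :
    ∃ C > 0, ∀ c, 1 < c → c ^ 2 < 2 →
      C * -log (c ^ 2 - 1) ≤ ∫ s in Ioi 1, heightIntegrand m c s := by
  have hm' : (0 : ℝ) < m := by exact_mod_cast Nat.pos_of_ne_zero hm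
  refine ⟨(√(m * 2 ^ (m - 1) * 7))⁻¹, by positivity, fun c hc₁ hc₂ => ?_⟩
  set ε := c ^ 2 - 1
  have hε : 0 < ε := by nlinarith
  have hε₁ : 1 + ε ≤ 2 := by linarith
  have hsub : Ioc (1 + ε) 2 ⊆ Ioi 1 := Ioc_subset_Ioi_self.trans (Ioi_subset_Ioi (by linarith))
  calc (√(m * 2 ^ (m - 1) * 7))⁻¹ * -log ε
      = ∫ s in Ioc (1 + ε) 2, (√(m * 2 ^ (m - 1) * 7))⁻¹ * (s - 1)⁻¹ := by
        rw [← intervalIntegral.integral_of_le hε₁, integral_const_mul_inv_sub_one hε]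
    _ ≤ ∫ s in Ioc (1 + ε) 2, heightIntegrand m c s := by
        refine setIntegral_mono_on ?_ ((integrableOn_heightIntegrand hm hc₁).mono_set hsub)
          measurableSet_Ioc fun s hs => ?_
        · refine (ContinuousOn.intervalIntegrable_of_Icc hε₁ ?_).1
          exact continuousOn_const.mul ((continuousOn_id.sub continuousOn_const).inv₀
            fun s hs => (sub_pos.2 (by linarith [hs.1] : (1 : ℝ) < s)).ne')
        · rw [← mul_inv, ← one_div]
          exact one_div_mul_sub_one_le_heightIntegrand hm hc₁ (by linarith [hs.1]) hs.2
    _ ≤ ∫ s in Ioi 1, heightIntegrand m c s :=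
        setIntegral_mono_set (integrableOn_heightIntegrand hm hc₁)
          (.of_forall (heightIntegrand_nonneg m c))
          hsub.eventuallyLE

lemma tendsto_cosh_sq_sub_one_nhdsGT_zero :
    Tendsto (fun a => cosh a ^ 2 - 1) (𝓝[>] 0) (𝓝[>] 0) := by
  refine tendsto_nhdsWithin_of_tendsto_nhds_of_eventually_within _ ?_ ?_
  · have h : Continuous fun a => cosh a ^ 2 - 1 := by fun_prop
    simpa using (h.tendsto 0).mono_left nhdsWithin_le_nhds
  · filter_upwards [self_mem_nhdsWithin] with a ha
    have := one_lt_cosh.2 (ne_of_gt ha)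
    simp only [mem_Ioi]; nlinarith

end TranslationHypersurface

open TranslationHypersurface

/-- T(a) → +∞ as a → 0⁺. -/
theorem md_asymptotic_height_tendsto_atTop (n : ℕ) (hn : 2 ≤ n) :
    Tendsto (fun a : ℝ => Real.cosh a * (∫ s in Set.Ioi (1:ℝ),
        1 / (Real.sqrt (s ^ (2 * n - 2) - 1) * Real.sqrt (Real.cosh a ^ 2 * s ^ 2 - 1))))
      (nhdsWithin 0 (Set.Ioi 0)) atTop := by
  obtain ⟨C, hC, hlower⟩ :=
    exists_pos_mul_neg_log_le_integral_heightIntegrand (m := 2 * n - 2) (by omega)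
  have hε := tendsto_cosh_sq_sub_one_nhdsGT_zero
  refine tendsto_atTop_mono' _ ?_
    ((tendsto_neg_atBot_atTop.comp (tendsto_log_nhdsGT_zero.comp hε)).const_mul_atTop hC)
  filter_upwards [self_mem_nhdsWithin, hε.eventually (Ioo_mem_nhdsGT one_pos)] with a ha hε₁
  have hc : 1 < cosh a := one_lt_cosh.2 (ne_of_gt ha)
  calc _ ≤ ∫ s in Ioi 1, heightIntegrand (2 * n - 2) (cosh a) s :=
        hlower _ hc (by linarith [hε₁.2])
    _ ≤ _ := le_mul_of_one_le_left (setIntegral_nonneg measurableSet_Ioi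
        fun s _ => heightIntegrand_nonneg _ _ s) hc.le
end

section
/- T(a) → π/(2n−2) as a → +∞, where T(a) = cosh(a) · ∫₁^∞ (s^(2n−2) − 1)^(−1/2) · (cosh²(a)·s² − 1)^(−1/2) ds. -/
/-!
Moving the factor `cosh a` inside the integral turns the integrand into
`1 / (√(s ^ m - 1) * √(s ^ 2 - ε))` with `m = 2n - 2` and `ε = cosh⁻² a → 0`. For `ε ≤ 1/2` it is dominated by `√2 / (√(s ^ m - 1) * s)`,
so the integral is continuous at `ε = 0`, where it equals `π / m` because
`(2 / m) * arctan √(s ^ m - 1)` is a primitive of the limiting integrand.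
-/

open Real MeasureTheory Filter Set Topology

lemma tendsto_cosh_atTop : Tendsto cosh atTop atTop := by
  refine tendsto_atTop_mono (fun x => ?_) (tendsto_exp_atTop.atTop_div_const two_pos)
  rw [cosh_eq]
  linarith [exp_pos (-x)]

lemma tendsto_inv_cosh_sq_atTop : Tendsto (fun a => (cosh a ^ 2)⁻¹) atTop (𝓝 0) :=
  tendsto_inv_atTop_zero.comp ((tendsto_pow_atTop two_ne_zero).comp tendsto_cosh_atTop)

section ArctanPrimitive

variable {m : ℕ}

lemma hasDerivAt_arctan_sqrt_pow_sub_one (hm : m ≠ 0) {s : ℝ} (hs : 1 < s) :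
    HasDerivAt (fun x : ℝ => 2 / m * arctan √(x ^ m - 1)) (1 / (√(s ^ m - 1) * s)) s := by
  have hpos : 0 < s ^ m - 1 := sub_pos.2 (one_lt_pow₀ hs hm)
  have hsqrt : HasDerivAt (fun x : ℝ => √(x ^ m - 1)) (m * s ^ (m - 1) / (2 * √(s ^ m - 1))) s :=
    (((hasDerivAt_pow m s).sub_const 1).sqrt hpos.ne').congr_deriv (by ring)
  refine ((hasDerivAt_arctan _).comp s hsqrt).const_mul (2 / m : ℝ) |>.congr_deriv ?_
  have hpow : s ^ m = s ^ (m - 1) * s := by rw [← pow_succ, Nat.sub_add_cancel (by omega)]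
  have hs0 : s ≠ 0 := by positivity
  have hm0 : (m : ℝ) ≠ 0 := by exact_mod_cast hm
  rw [sq_sqrt hpos.le, add_sub_cancel, hpow]
  field_simp [(sqrt_pos.2 hpos).ne']

lemma continuous_arctan_sqrt_pow_sub_one :
    Continuous fun x : ℝ => 2 / m * arctan √(x ^ m - 1) := by
  fun_prop

lemma tendsto_arctan_sqrt_pow_sub_one_atTop (hm : m ≠ 0) :
    Tendsto (fun x : ℝ => 2 / m * arctan √(x ^ m - 1)) atTop (𝓝 (2 / m * (π / 2))) := by
  have hsqrt : Tendsto (fun x : ℝ => √(x ^ m - 1)) atTop atTop :=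
    tendsto_sqrt_atTop.comp (tendsto_atTop_add_const_right _ _ (tendsto_pow_atTop hm))
  exact ((tendsto_nhds_of_tendsto_nhdsWithin tendsto_arctan_atTop).comp hsqrt).const_mul _

lemma integrableOn_one_div_sqrt_pow_sub_one_mul (hm : m ≠ 0) :
    IntegrableOn (fun s : ℝ => 1 / (√(s ^ m - 1) * s)) (Ioi 1) :=
  integrableOn_Ioi_deriv_of_nonneg continuous_arctan_sqrt_pow_sub_one.continuousWithinAt
    (fun _ hs => hasDerivAt_arctan_sqrt_pow_sub_one hm hs)
    (fun s hs => by have : (0 : ℝ) < s := zero_lt_one.trans hs; positivity)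
    (tendsto_arctan_sqrt_pow_sub_one_atTop hm)

lemma integral_one_div_sqrt_pow_sub_one_mul (hm : m ≠ 0) :
    ∫ s in Ioi (1 : ℝ), 1 / (√(s ^ m - 1) * s) = π / m := by
  rw [integral_Ioi_of_hasDerivAt_of_tendsto continuous_arctan_sqrt_pow_sub_one.continuousWithinAt
    (fun _ hs => hasDerivAt_arctan_sqrt_pow_sub_one hm hs)
    (integrableOn_one_div_sqrt_pow_sub_one_mul hm) (tendsto_arctan_sqrt_pow_sub_one_atTop hm)]
  simp only [one_pow, sub_self, sqrt_zero, arctan_zero, mul_zero, sub_zero]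
  ring

end ArctanPrimitive

noncomputable def heightIntegrand (m : ℕ) (ε s : ℝ) : ℝ := 1 / (√(s ^ m - 1) * √(s ^ 2 - ε))

section HeightIntegrand

variable {m : ℕ}

lemma mul_one_div_eq_heightIntegrand {c : ℝ} (hc : 0 < c) (s : ℝ) :
    c * (1 / (√(s ^ m - 1) * √(c ^ 2 * s ^ 2 - 1))) = heightIntegrand m (c ^ 2)⁻¹ s := by
  have hsqrt : √(s ^ 2 - (c ^ 2)⁻¹) = √(c ^ 2 * s ^ 2 - 1) / c := by
    rw [show s ^ 2 - (c ^ 2)⁻¹ = (c ^ 2 * s ^ 2 - 1) / c ^ 2 by field_simp,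
      sqrt_div' _ (sq_nonneg c), sqrt_sq hc.le]
  rw [heightIntegrand, hsqrt, ← mul_div_assoc (√(s ^ m - 1)), one_div_div, mul_one_div]

lemma measurable_heightIntegrand (ε : ℝ) : Measurable (heightIntegrand m ε) := by
  unfold heightIntegrand
  fun_prop

lemma heightIntegrand_zero {s : ℝ} (hs : 0 ≤ s) :
    heightIntegrand m 0 s = 1 / (√(s ^ m - 1) * s) := by
  rw [heightIntegrand, sub_zero, sqrt_sq hs]

lemma norm_heightIntegrand_le (hm : m ≠ 0) {ε s : ℝ} (hε : ε ≤ 1 / 2) (hs : 1 < s) :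
    ‖heightIntegrand m ε s‖ ≤ √2 * (1 / (√(s ^ m - 1) * s)) := by
  have hA : 0 < √(s ^ m - 1) := sqrt_pos.2 (sub_pos.2 (one_lt_pow₀ hs hm))
  have hs0 : 0 < s := zero_lt_one.trans hs
  have hB : s ≤ √2 * √(s ^ 2 - ε) := by
    rw [← sqrt_mul zero_le_two]
    exact le_sqrt_of_sq_le (by nlinarith)
  have hB0 : 0 < √(s ^ 2 - ε) := pos_of_mul_pos_right (hs0.trans_le hB) (sqrt_nonneg 2)
  rw [heightIntegrand, norm_of_nonneg (by positivity), mul_one_div,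
    div_le_div_iff₀ (by positivity) (by positivity)]
  nlinarith [mul_le_mul_of_nonneg_left hB hA.le]

lemma continuousAt_heightIntegrand (hm : m ≠ 0) {s : ℝ} (hs : 1 < s) :
    ContinuousAt (fun ε => heightIntegrand m ε s) 0 := by
  have hA : 0 < √(s ^ m - 1) := sqrt_pos.2 (sub_pos.2 (one_lt_pow₀ hs hm))
  have hB : 0 < √(s ^ 2 - 0) := sqrt_pos.2 (by nlinarith)
  unfold heightIntegrand
  exact continuousAt_const.div (by fun_prop) (mul_pos hA hB).ne'

lemma tendsto_integral_heightIntegrand (hm : m ≠ 0) :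
    Tendsto (fun ε => ∫ s in Ioi (1 : ℝ), heightIntegrand m ε s) (𝓝 0) (𝓝 (π / m)) := by
  have hcont : ContinuousAt (fun ε => ∫ s in Ioi (1 : ℝ), heightIntegrand m ε s) 0 := by
    refine continuousAt_of_dominated
      (Eventually.of_forall fun ε => (measurable_heightIntegrand ε).aestronglyMeasurable)
      ?_ ((integrableOn_one_div_sqrt_pow_sub_one_mul hm).const_mul √2)
      ((ae_restrict_mem measurableSet_Ioi).mono fun s hs => continuousAt_heightIntegrand hm hs)
    filter_upwards [eventually_le_nhds (show (0 : ℝ) < 1 / 2 by norm_num)] with ε hε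
    exact (ae_restrict_mem measurableSet_Ioi).mono fun s hs => norm_heightIntegrand_le hm hε hs
  have hzero : ∫ s in Ioi (1 : ℝ), heightIntegrand m 0 s = π / m := by
    rw [← integral_one_div_sqrt_pow_sub_one_mul hm]
    exact setIntegral_congr_fun measurableSet_Ioi fun s hs =>
      heightIntegrand_zero (zero_lt_one.trans hs).le
  exact hzero ▸ hcont.tendsto

end HeightIntegrand

/-- T(a) → π/(2n−2) as a → +∞. -/
theorem md_asymptotic_height_tendsto_pi (n : ℕ) (hn : 2 ≤ n) :
    Tendsto (fun a : ℝ => Real.cosh a * (∫ s in Set.Ioi (1:ℝ),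
        1 / (Real.sqrt (s ^ (2 * n - 2) - 1) * Real.sqrt (Real.cosh a ^ 2 * s ^ 2 - 1))))
      atTop (nhds (Real.pi / (2 * (n : ℝ) - 2))) := by
  have hcast : ((2 * n - 2 : ℕ) : ℝ) = 2 * n - 2 := by
    rw [Nat.cast_sub (by omega)]
    push_cast
    ring
  rw [← hcast]
  refine ((tendsto_integral_heightIntegrand (by omega)).comp tendsto_inv_cosh_sq_atTop).congr
    fun a => ?_
  rw [Function.comp_apply, ← integral_const_mul]
  simp only [mul_one_div_eq_heightIntegrand (cosh_pos a)]
end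

section
/- For n ≥ 2 and fixed a > 0, the function ρ ↦ λ(a,ρ) = ∫_a^ρ d/√(cosh(u)^(2n−2) − d²) du with d = cosh(a)^(n−1) extends continuously to ρ = a with λ(a,a) = 0, is C¹ on (a,∞), and its derivative d/√(cosh(ρ)^(2n−2) − d²) tends to +∞ as ρ → a⁺ (so the generating curve of M_d, d>1, meets the level ρ = a with vertical tangent). -/
/-!
The radicand `φ u = cosh u ^ (2n-2) - cosh a ^ (2n-2)` vanishes at `u = a` and grows at least
linearly to the right of `a`, with slope `cosh a ^ (2n-3) * sinh a > 0` (the tangent line of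
`cosh` at `a` lies below it). Hence `d / √φ` is dominated by a multiple of `(u - a) ^ (-1/2)`,
which is integrable at `a`, while `√φ → 0⁺` makes `d / √φ` blow up.
-/

open Real MeasureTheory intervalIntegral Filter Topology

theorem intervalIntegral.continuousWithinAt_Ici_primitive {f : ℝ → ℝ} {μ : Measure ℝ}
    [NullSingletonClass μ] {a b : ℝ} (hf : IntervalIntegrable f μ a b) (hab : a < b) :
    ContinuousWithinAt (fun x => ∫ t in a..x, f t ∂μ) (Set.Ici a) a := by
  have hcont := continuousOn_primitive_interval' hf Set.left_mem_uIcc a Set.left_mem_uIcc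
  rw [Set.uIcc_of_le hab.le] at hcont
  exact hcont.mono_of_mem_nhdsWithin (Icc_mem_nhdsGE hab)

theorem Real.tendsto_sqrt_nhdsGT_zero : Tendsto (√·) (𝓝[>] 0) (𝓝[>] 0) := by
  refine tendsto_nhdsWithin_of_tendsto_nhds_of_eventually_within _ ?_ ?_
  · simpa using continuous_sqrt.tendsto' 0 0 sqrt_zero |>.mono_left nhdsWithin_le_nhds
  · filter_upwards [self_mem_nhdsWithin] with x hx using sqrt_pos.2 hx

section LinearLowerBound

variable {φ : ℝ → ℝ} {a b m : ℝ}

theorem intervalIntegrable_div_sqrt_of_linear_le (c : ℝ) (hφ : Continuous φ) (hm : 0 < m)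
    (hlow : ∀ u, a ≤ u → m * (u - a) ≤ φ u) (hab : a ≤ b) :
    IntervalIntegrable (fun u => c / √(φ u)) volume a b := by
  have hdom :
      IntervalIntegrable (fun u => (√m)⁻¹ * (u - a) ^ (-(1 / 2) : ℝ)) volume a b := by
    have := (intervalIntegrable_rpow' (r := -(1 / 2)) (by norm_num)).comp_sub_right a
      (a := 0) (b := b - a)
    simpa using this.const_mul (√m)⁻¹
  suffices IntervalIntegrable (fun u => (√(φ u))⁻¹) volume a b by
    simpa only [div_eq_mul_inv] using this.const_mul c
  rw [intervalIntegrable_iff_integrableOn_Ioc_of_le hab] at hdom ⊢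
  refine hdom.integrable.mono' hφ.sqrt.measurable.inv.aestronglyMeasurable ?_
  rw [ae_restrict_iff' measurableSet_Ioc]
  filter_upwards with u hu
  have hpos : 0 < m * (u - a) := mul_pos hm (sub_pos.2 hu.1)
  calc ‖(√(φ u))⁻¹‖ = (√(φ u))⁻¹ := norm_of_nonneg (inv_nonneg.2 (sqrt_nonneg _))
    _ ≤ (√(m * (u - a)))⁻¹ := inv_anti₀ (sqrt_pos.2 hpos) (sqrt_le_sqrt (hlow u hu.1.le))
    _ = (√m)⁻¹ * (u - a) ^ (-(1 / 2) : ℝ) := by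
      rw [sqrt_mul hm.le, mul_inv, rpow_neg (sub_pos.2 hu.1).le, ← sqrt_eq_rpow]

theorem hasDerivAt_integral_div_sqrt_of_linear_le (c : ℝ) (hφ : Continuous φ) (hm : 0 < m)
    (hlow : ∀ u, a ≤ u → m * (u - a) ≤ φ u) {ρ : ℝ} (hρ : a < ρ) :
    HasDerivAt (fun x => ∫ u in a..x, c / √(φ u)) (c / √(φ ρ)) ρ := by
  have hφρ : 0 < φ ρ := (mul_pos hm (sub_pos.2 hρ)).trans_le (hlow ρ hρ.le)
  exact integral_hasDerivAt_right (intervalIntegrable_div_sqrt_of_linear_le c hφ hm hlow hρ.le)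
    (measurable_const.div hφ.sqrt.measurable).stronglyMeasurable.stronglyMeasurableAtFilter
    (continuousAt_const.div hφ.sqrt.continuousAt (sqrt_pos.2 hφρ).ne')

theorem tendsto_div_sqrt_nhdsGT_of_linear_le {c : ℝ} (hc : 0 < c) (hφ : ContinuousAt φ a)
    (hφa : φ a = 0) (hm : 0 < m) (hlow : ∀ u, a ≤ u → m * (u - a) ≤ φ u) :
    Tendsto (fun u => c / √(φ u)) (𝓝[>] a) atTop := by
  have hφ0 : Tendsto φ (𝓝[>] a) (𝓝[>] 0) := by
    refine tendsto_nhdsWithin_of_tendsto_nhds_of_eventually_within _ ?_ ?_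
    · exact hφa ▸ hφ.tendsto.mono_left nhdsWithin_le_nhds
    · filter_upwards [self_mem_nhdsWithin] with u hu
      exact (mul_pos hm (sub_pos.2 hu)).trans_le (hlow u hu.le)
  simpa only [div_eq_mul_inv, Function.comp_def, Pi.inv_apply] using
    (tendsto_sqrt_nhdsGT_zero.comp hφ0).inv_tendsto_nhdsGT_zero.const_mul_atTop hc

end LinearLowerBound

theorem Real.cosh_add_sinh_mul_sub_le_cosh {a u : ℝ} (ha : 0 ≤ a) (hau : a ≤ u) :
    cosh a + sinh a * (u - a) ≤ cosh u := by
  have hcosh : cosh u = cosh a * cosh (u - a) + sinh a * sinh (u - a) := by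
    rw [← cosh_add, add_sub_cancel]
  have h1 : cosh a ≤ cosh a * cosh (u - a) :=
    le_mul_of_one_le_right (cosh_pos a).le (one_le_cosh _)
  have h2 : sinh a * (u - a) ≤ sinh a * sinh (u - a) :=
    mul_le_mul_of_nonneg_left (self_le_sinh_iff.2 (sub_nonneg.2 hau)) (sinh_nonneg_iff.2 ha)
  linarith

theorem pow_mul_sub_le_pow_succ_sub_pow_succ {R : Type*} [CommRing R] [LinearOrder R]
    [IsStrictOrderedRing R] {s t : R} (hs : 0 ≤ s) (hst : s ≤ t) (k : ℕ) :
    s ^ k * (t - s) ≤ t ^ (k + 1) - s ^ (k + 1) := by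
  have := mul_le_mul_of_nonneg_right (pow_le_pow_left₀ hs hst k) (hs.trans hst)
  rw [pow_succ, pow_succ]
  linarith

theorem Real.cosh_pow_mul_sinh_mul_sub_le {a u : ℝ} (ha : 0 ≤ a) (hau : a ≤ u) (k : ℕ) :
    cosh a ^ k * sinh a * (u - a) ≤ cosh u ^ (k + 1) - cosh a ^ (k + 1) := by
  have htangent := cosh_add_sinh_mul_sub_le_cosh ha hau
  have hsinh : 0 ≤ sinh a * (u - a) := mul_nonneg (sinh_nonneg_iff.2 ha) (sub_nonneg.2 hau)
  calc cosh a ^ k * sinh a * (u - a) = cosh a ^ k * (sinh a * (u - a)) := mul_assoc _ _ _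
    _ ≤ cosh a ^ k * (cosh u - cosh a) :=
      mul_le_mul_of_nonneg_left (by linarith) (pow_nonneg (cosh_pos a).le k)
    _ ≤ cosh u ^ (k + 1) - cosh a ^ (k + 1) :=
      pow_mul_sub_le_pow_succ_sub_pow_succ (cosh_pos a).le (by linarith) k

/-- For d = cosh(a)^{n−1} > 1, the height function λ(a,ρ) = ∫_a^ρ d/√(cosh u^(2n−2) − d²) du
vanishes at ρ = a and extends continuously there, is C¹ on (a,∞) with derivative
d/√(cosh ρ^(2n−2) − d²), and this derivative blows up to +∞ as ρ → a⁺
(vertical tangent of the generating curve). -/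
theorem md_generating_curve_vertical_tangent (n : ℕ) (hn : 2 ≤ n) (a : ℝ) (ha : 0 < a) :
    (∫ u in a..a, Real.cosh a ^ (n - 1) /
        Real.sqrt (Real.cosh u ^ (2 * n - 2) - (Real.cosh a ^ (n - 1)) ^ 2)) = 0 ∧
    ContinuousWithinAt (fun ρ : ℝ => ∫ u in a..ρ, Real.cosh a ^ (n - 1) /
        Real.sqrt (Real.cosh u ^ (2 * n - 2) - (Real.cosh a ^ (n - 1)) ^ 2))
      (Set.Ici a) a ∧
    (∀ ρ ∈ Set.Ioi a, HasDerivAt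
      (fun ρ : ℝ => ∫ u in a..ρ, Real.cosh a ^ (n - 1) /
        Real.sqrt (Real.cosh u ^ (2 * n - 2) - (Real.cosh a ^ (n - 1)) ^ 2))
      (Real.cosh a ^ (n - 1) /
        Real.sqrt (Real.cosh ρ ^ (2 * n - 2) - (Real.cosh a ^ (n - 1)) ^ 2)) ρ) ∧
    Tendsto (fun ρ : ℝ => Real.cosh a ^ (n - 1) /
        Real.sqrt (Real.cosh ρ ^ (2 * n - 2) - (Real.cosh a ^ (n - 1)) ^ 2))
      (nhdsWithin a (Set.Ioi a)) atTop := by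
  obtain ⟨k, hk⟩ : ∃ k, 2 * n - 2 = k + 1 := ⟨2 * n - 3, by omega⟩
  have hsq : (cosh a ^ (n - 1)) ^ 2 = cosh a ^ (k + 1) := by
    rw [← pow_mul, ← hk]; congr 1; omega
  simp only [hk, hsq]
  have hφ : Continuous fun u => cosh u ^ (k + 1) - cosh a ^ (k + 1) := by fun_prop
  have hm : 0 < cosh a ^ k * sinh a := mul_pos (pow_pos (cosh_pos a) k) (sinh_pos_iff.2 ha)
  have hlow := fun u (hu : a ≤ u) => cosh_pow_mul_sinh_mul_sub_le ha.le hu k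
  refine ⟨integral_same, ?_,
    fun ρ hρ => hasDerivAt_integral_div_sqrt_of_linear_le _ hφ hm hlow hρ,
    tendsto_div_sqrt_nhdsGT_of_linear_le (pow_pos (cosh_pos a) _) hφ.continuousAt (sub_self _)
      hm hlow⟩
  exact continuousWithinAt_Ici_primitive
    (intervalIntegrable_div_sqrt_of_linear_le _ hφ hm hlow (lt_add_one a).le) (lt_add_one a)
end
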